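/- arXiv:1912.13305 — 3 statements merged into one kernel-verified Lean document; each statement's English description precedes it below -/
import Mathlib

section
/- Let l > 0 and let {α_k} be a sequence with 0 < α_k·l < 1 for all k, and define A_k = ∏_{i=1}^k (1 − α_i l) and B_k = Σ_{i=1}^k α_i² ∏_{j=i+1}^k (1 − α_j l). Then B_k > A_k · Σ_{i=1}^k α_i² for every k ≥ 1; in particular, if lim B_k = 0 and liminf Σ_{i=1}^k α_i² > 0, then A_k → 0. -/
open Filter

theorem stmt_9 (l : ℝ) (hl : 0 < l) (α : ℕ → ℝ)
    (hα : ∀ i, 0 < α i * l ∧ α i * l < 1) :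
    (∀ k, 1 ≤ k →
        (∏ i ∈ Finset.Icc 1 k, (1 - α i * l)) *
            (∑ i ∈ Finset.Icc 1 k, (α i) ^ 2) <
          ∑ i ∈ Finset.Icc 1 k,
            (α i) ^ 2 * ∏ j ∈ Finset.Icc (i + 1) k, (1 - α j * l)) ∧
      ((Tendsto (fun k => ∑ i ∈ Finset.Icc 1 k,
            (α i) ^ 2 * ∏ j ∈ Finset.Icc (i + 1) k, (1 - α j * l))
          atTop (nhds 0)) →
        (∃ c > 0, ∀ᶠ k in atTop, c ≤ ∑ i ∈ Finset.Icc 1 k, (α i) ^ 2) →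
        Tendsto (fun k => ∏ i ∈ Finset.Icc 1 k, (1 - α i * l))
          atTop (nhds 0)) := by
  have hfpos : ∀ i, 0 < 1 - α i * l := fun i => by linarith [(hα i).2]
  have hαpos : ∀ i, 0 < α i := fun i => by nlinarith [(hα i).1]
  have key : ∀ k, 1 ≤ k →
      (∏ i ∈ Finset.Icc 1 k, (1 - α i * l)) *
          (∑ i ∈ Finset.Icc 1 k, (α i) ^ 2) <
        ∑ i ∈ Finset.Icc 1 k,
          (α i) ^ 2 * ∏ j ∈ Finset.Icc (i + 1) k, (1 - α j * l) := by
    intro k hk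
    rw [Finset.mul_sum]
    apply Finset.sum_lt_sum_of_nonempty
    · exact Finset.nonempty_Icc.mpr hk
    · intro i hi
      simp only [Finset.mem_Icc] at hi
      have hsplit : (∏ j ∈ Finset.Icc 1 k, (1 - α j * l)) =
          (∏ j ∈ Finset.Icc 1 i, (1 - α j * l)) *
            ∏ j ∈ Finset.Icc (i + 1) k, (1 - α j * l) := by
        rw [Finset.Icc_add_one_left_eq_Ioc i k, show (1 : ℕ) = 0 + 1 from rfl,
          Finset.Icc_add_one_left_eq_Ioc 0 k, Finset.Icc_add_one_left_eq_Ioc 0 i]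
        exact (Finset.prod_Ioc_consecutive _ (Nat.zero_le i) hi.2).symm
      rw [hsplit]
      have h1 : (∏ j ∈ Finset.Icc 1 i, (1 - α j * l)) < 1 := by
        obtain ⟨m, rfl⟩ : ∃ m, i = m + 1 :=
          ⟨i - 1, (Nat.succ_pred_eq_of_pos hi.1).symm⟩
        rw [Finset.prod_Icc_succ_top (Nat.le_add_left 1 m)]
        have hQ1 : (∏ j ∈ Finset.Icc 1 m, (1 - α j * l)) ≤ 1 :=
          Finset.prod_le_one (fun j _ => le_of_lt (hfpos j))
            (fun j _ => by linarith [(hα j).1])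
        have hQ0 : 0 < ∏ j ∈ Finset.Icc 1 m, (1 - α j * l) :=
          Finset.prod_pos fun j _ => hfpos j
        nlinarith [(hα (m + 1)).1, hfpos (m + 1)]
      have h2 : 0 < ∏ j ∈ Finset.Icc (i + 1) k, (1 - α j * l) :=
        Finset.prod_pos fun j _ => hfpos j
      have h3 : 0 < α i ^ 2 := pow_pos (hαpos i) 2
      nlinarith [mul_pos (sub_pos.mpr h1) (mul_pos h2 h3)]
  refine ⟨key, fun hB hc => ?_⟩
  obtain ⟨c, hc0, hev⟩ := hc
  have hA0 : ∀ k, 0 < ∏ i ∈ Finset.Icc 1 k, (1 - α i * l) := fun k =>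
    Finset.prod_pos fun j _ => hfpos j
  apply squeeze_zero' (Eventually.of_forall fun k => le_of_lt (hA0 k))
    (g := fun k => (∑ i ∈ Finset.Icc 1 k,
      (α i) ^ 2 * ∏ j ∈ Finset.Icc (i + 1) k, (1 - α j * l)) / c)
  · filter_upwards [hev, eventually_ge_atTop 1] with k hck hk1
    rw [le_div_iff₀ hc0]
    calc (∏ i ∈ Finset.Icc 1 k, (1 - α i * l)) * c
        ≤ (∏ i ∈ Finset.Icc 1 k, (1 - α i * l)) *
            (∑ i ∈ Finset.Icc 1 k, (α i) ^ 2) := by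
          exact mul_le_mul_of_nonneg_left hck (le_of_lt (hA0 k))
      _ ≤ _ := le_of_lt (key k hk1)
  · simpa using hB.div_const c
end

section
/- Let σ > 0 and β, l > 0 with βl > 1 and α_i = β/(i+σ), and suppose for all k: e_{k+1} ≤ (1 − α_k l) e_k + (LM/2) α_k², where e_k ≥ 0, L, M > 0. Then there exists a constant C such that e_k ≤ C/k for all k ≥ 1, i.e., e_k = O(1/k). -/
theorem stmt_14 (β l σ L M : ℝ) (hσ : 0 < σ) (hβ : 0 < β) (hl : 0 < l)
    (hβl : 1 < β * l) (hL : 0 < L) (hM : 0 < M)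
    (α : ℕ → ℝ) (hα : ∀ k, α k = β / ((k : ℝ) + σ))
    (hα1 : α 1 * l < 1)
    (e : ℕ → ℝ) (he : ∀ k, 0 ≤ e k)
    (hrec : ∀ k, 1 ≤ k →
      e (k + 1) ≤ (1 - α k * l) * e k + L * M / 2 * (α k) ^ 2) :
    ∃ C : ℝ, ∀ k, 1 ≤ k → e k ≤ C / (k : ℝ) := by
  obtain ⟨δ, hδdef⟩ : ∃ d : ℝ, d = β * l - 1 := ⟨_, rfl⟩
  have hδ : 0 < δ := by rw [hδdef]; linarith
  obtain ⟨K, hK1, hKδ⟩ : ∃ K : ℕ, 1 ≤ K ∧ 2 * σ ≤ δ * K := by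
    refine ⟨max 1 ⌈2 * σ / δ⌉₊, le_max_left _ _, ?_⟩
    have h1 : 2 * σ / δ ≤ (⌈2 * σ / δ⌉₊ : ℝ) := Nat.le_ceil _
    have h2 : ((⌈2 * σ / δ⌉₊ : ℕ) : ℝ) ≤ ((max 1 ⌈2 * σ / δ⌉₊ : ℕ) : ℝ) := by
      exact_mod_cast Nat.le_max_right 1 _
    have : 2 * σ / δ ≤ ((max 1 ⌈2 * σ / δ⌉₊ : ℕ) : ℝ) := le_trans h1 h2
    calc 2 * σ = 2 * σ / δ * δ := by field_simp
    _ ≤ ((max 1 ⌈2 * σ / δ⌉₊ : ℕ) : ℝ) * δ := by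
        exact mul_le_mul_of_nonneg_right this hδ.le
    _ = δ * ((max 1 ⌈2 * σ / δ⌉₊ : ℕ) : ℝ) := by ring
  obtain ⟨C, hCdef⟩ : ∃ c : ℝ,
      c = 2 * L * M * β ^ 2 / δ + ∑ j ∈ Finset.range (K + 1), (j : ℝ) * e j := ⟨_, rfl⟩
  have hsumnn : 0 ≤ ∑ j ∈ Finset.range (K + 1), (j : ℝ) * e j :=
    Finset.sum_nonneg fun j _ => mul_nonneg (Nat.cast_nonneg j) (he j)
  have hCb : 2 * L * M * β ^ 2 / δ ≤ C := by
    rw [hCdef]; linarith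
  have hC0 : 0 ≤ C := le_trans (by positivity) hCb
  have hCk : ∀ k : ℕ, k ≤ K → (k : ℝ) * e k ≤ C := by
    intro k hk
    have hmem : k ∈ Finset.range (K + 1) := Finset.mem_range.mpr (by omega)
    have := Finset.single_le_sum (f := fun (j : ℕ) => (j : ℝ) * e j)
      (fun j _ => mul_nonneg (Nat.cast_nonneg j) (he j)) hmem
    have hpos : 0 ≤ 2 * L * M * β ^ 2 / δ := by positivity
    rw [hCdef]; linarith
  have hmain : ∀ k : ℕ, K ≤ k → e k ≤ C / (k : ℝ) := by
    intro k hk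
    induction k, hk using Nat.le_induction with
    | base =>
      have hKpos : (0 : ℝ) < (K : ℝ) := by exact_mod_cast hK1
      rw [le_div_iff₀ hKpos]
      have := hCk K le_rfl
      linarith [this]
    | succ k hk ih =>
      have hk1 : 1 ≤ k := le_trans hK1 hk
      obtain ⟨x, hxdef⟩ : ∃ y : ℝ, y = (k : ℝ) := ⟨_, rfl⟩
      rw [← hxdef] at ih
      have hx1 : (1 : ℝ) ≤ x := by rw [hxdef]; exact_mod_cast hk1
      have hxK : ((K : ℝ)) ≤ x := by rw [hxdef]; exact_mod_cast hk
      have hx0 : 0 < x := by linarith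
      have hxσ : 0 < x + σ := by linarith
      have hx1' : 0 < x + 1 := by linarith
      have hδx : 2 * σ ≤ δ * x := le_trans hKδ (mul_le_mul_of_nonneg_left hxK hδ.le)
      -- α k * l < 1
      have hαk : α k = β / (x + σ) := by rw [hxdef]; exact hα k
      have hαkl : α k * l < 1 := by
        have hα1' : α 1 = β / (1 + σ) := by rw [hα 1]; norm_num
        have hle : β / (x + σ) ≤ β / (1 + σ) :=
          div_le_div_of_nonneg_left hβ.le (by linarith) (by linarith)
        have : α k ≤ α 1 := by rw [hαk, hα1']; exact hle
        calc α k * l ≤ α 1 * l := mul_le_mul_of_nonneg_right this hl.le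
        _ < 1 := hα1
      have h1 : e (k + 1) ≤ (1 - α k * l) * e k + L * M / 2 * (α k) ^ 2 := hrec k hk1
      have h2 : (1 - α k * l) * e k ≤ (1 - α k * l) * (C / x) :=
        mul_le_mul_of_nonneg_left ih (by linarith)
      -- key polynomial inequality
      have hCδ : 2 * L * M * β ^ 2 ≤ C * δ := by
        have := hCb
        calc 2 * L * M * β ^ 2 = 2 * L * M * β ^ 2 / δ * δ := by field_simp
        _ ≤ C * δ := mul_le_mul_of_nonneg_right this hδ.le
      have key2 : L * M * β ^ 2 / 2 * (x * (x + 1)) ≤ C * (x + σ) * (δ * x + β * l - σ) := by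
        have t1 : C * (x + σ) * (δ * x / 2) ≤ C * (x + σ) * (δ * x + β * l - σ) :=
          mul_le_mul_of_nonneg_left (by linarith) (mul_nonneg hC0 hxσ.le)
        have t2 : 2 * L * M * β ^ 2 * ((x + σ) * x / 2) ≤ C * δ * ((x + σ) * x / 2) :=
          mul_le_mul_of_nonneg_right hCδ (by positivity)
        have t2' : C * δ * ((x + σ) * x / 2) = C * (x + σ) * (δ * x / 2) := by ring
        have t3 : L * M * β ^ 2 / 2 * x * (x + 1) ≤ L * M * β ^ 2 / 2 * x * (2 * (x + σ)) :=
          mul_le_mul_of_nonneg_left (by linarith) (by positivity)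
        nlinarith [t1, t2, t2', t3]
      have final : (1 - β / (x + σ) * l) * (C / x) + L * M / 2 * (β / (x + σ)) ^ 2
          ≤ C / (x + 1) := by
        rw [← sub_nonneg]
        have expand : C / (x + 1) - ((1 - β / (x + σ) * l) * (C / x)
            + L * M / 2 * (β / (x + σ)) ^ 2)
            = (C * (x + σ) * (δ * x + β * l - σ) - L * M * β ^ 2 / 2 * (x * (x + 1)))
              / (x * (x + 1) * (x + σ) ^ 2) := by
          rw [hδdef]
          field_simp
          ring
        rw [expand]
        apply div_nonneg (by linarith) (by positivity)
      have hcast : ((k + 1 : ℕ) : ℝ) = x + 1 := by rw [hxdef]; push_cast; ring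
      rw [hcast]
      calc e (k + 1) ≤ (1 - α k * l) * (C / x) + L * M / 2 * (α k) ^ 2 := by linarith
      _ = (1 - β / (x + σ) * l) * (C / x) + L * M / 2 * (β / (x + σ)) ^ 2 := by rw [hαk]
      _ ≤ C / (x + 1) := final
  refine ⟨C, fun k hk => ?_⟩
  rcases le_or_gt K k with h | h
  · exact hmain k h
  · have hk0 : (0 : ℝ) < (k : ℝ) := by exact_mod_cast hk
    rw [le_div_iff₀ hk0]
    have := hCk k h.le
    linarith
end

section
/- Let {e_k} be nonnegative reals satisfying e_{k+1} ≤ (1 − α_k l/2) e_k + C α_k³ for all k, where α_k = β/(k+σ), σ > 0, and βl > 4. Then e_k = O(1/k²). -/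
theorem stmt_15 (β l σ C : ℝ) (hσ : 0 < σ) (hβ : 0 < β) (hl : 0 < l)
    (hC : 0 < C) (hβl : 4 < β * l)
    (α : ℕ → ℝ) (hα : ∀ k, α k = β / ((k : ℝ) + σ))
    (hα1 : α 1 * l / 2 < 1)
    (e : ℕ → ℝ) (he : ∀ k, 0 ≤ e k)
    (hrec : ∀ k, 1 ≤ k →
      e (k + 1) ≤ (1 - α k * l / 2) * e k + C * (α k) ^ 3) :
    ∃ C' : ℝ, ∀ k, 1 ≤ k → e k ≤ C' / (k : ℝ) ^ 2 := by
  have hβl4 : 0 < β * l - 4 := by linarith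
  set M := max (e 1 * (1 + σ) ^ 2) (2 * C * β ^ 3 / (β * l - 4)) with hMdef
  have hM2 : 2 * C * β ^ 3 / (β * l - 4) ≤ M := le_max_right _ _
  have hM0 : 0 < M := lt_of_lt_of_le (by positivity) hM2
  have h1 : 2 * C * β ^ 3 ≤ M * (β * l - 4) := (div_le_iff₀ hβl4).mp hM2
  have key : ∀ k, 1 ≤ k → e k ≤ M / ((k : ℝ) + σ) ^ 2 := by
    intro k hk
    induction k with
    | zero => omega
    | succ n ih =>
      rcases Nat.lt_or_ge n 1 with h1n | h1n
      · -- base case: n = 0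
        interval_cases n
        have hb : e 1 * (1 + σ) ^ 2 ≤ M := le_max_left _ _
        have : e 1 ≤ M / (1 + σ) ^ 2 := (le_div_iff₀ (by positivity)).mpr hb
        simpa using this
      · have ihn := ih h1n
        have hrecn := hrec n h1n
        have ht : (0 : ℝ) < (n : ℝ) + σ := by positivity
        have htn : (1 : ℝ) ≤ (n : ℝ) := by exact_mod_cast h1n
        set t : ℝ := (n : ℝ) + σ with htdef
        have ht1 : 1 + σ ≤ t := by simp [htdef]; linarith
        have hαn : α n = β / t := hα n
        have hα1' : α 1 = β / (1 + σ) := by simpa using hα 1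
        -- contraction factor nonnegative
        have hαle : α n ≤ α 1 := by
          rw [hαn, hα1']
          apply div_le_div_of_nonneg_left hβ.le (by positivity) ht1
        have hfac : 0 ≤ 1 - α n * l / 2 := by
          have : α n * l / 2 ≤ α 1 * l / 2 := by
            have := mul_le_mul_of_nonneg_right hαle hl.le
            linarith
          linarith
        have step1 : e (n + 1) ≤ (1 - α n * l / 2) * (M / t ^ 2) + C * (β / t) ^ 3 := by
          calc e (n + 1) ≤ (1 - α n * l / 2) * e n + C * (α n) ^ 3 := hrecn
            _ ≤ (1 - α n * l / 2) * (M / t ^ 2) + C * (β / t) ^ 3 := by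
                rw [hαn]
                exact add_le_add (mul_le_mul_of_nonneg_left ihn (by rw [hαn] at hfac; exact hfac)) le_rfl
        have step2 : (1 - (β / t) * l / 2) * (M / t ^ 2) + C * (β / t) ^ 3 ≤ M / (t + 1) ^ 2 := by
          rw [← sub_nonneg]
          have hident : M / (t + 1) ^ 2 - ((1 - (β / t) * l / 2) * (M / t ^ 2) + C * (β / t) ^ 3)
              = (M * ((β * l / 2) * (t + 1) ^ 2 - 2 * t ^ 2 - t) - C * β ^ 3 * (t + 1) ^ 2)
                / (t ^ 3 * (t + 1) ^ 2) := by
            field_simp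
            ring
          rw [hident]
          apply div_nonneg _ (by positivity)
          nlinarith [mul_le_mul_of_nonneg_right h1 (sq_nonneg (t + 1)),
            mul_nonneg hM0.le ht.le]
        have hcast : ((n + 1 : ℕ) : ℝ) + σ = t + 1 := by push_cast; ring
        rw [hcast]
        calc e (n + 1) ≤ (1 - (β / t) * l / 2) * (M / t ^ 2) + C * (β / t) ^ 3 := by
              rw [hαn] at step1; exact step1
          _ ≤ M / (t + 1) ^ 2 := step2
  refine ⟨M, fun k hk => ?_⟩
  have hk1 : (1 : ℝ) ≤ (k : ℝ) := by exact_mod_cast hk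
  have := key k hk
  calc e k ≤ M / ((k : ℝ) + σ) ^ 2 := this
    _ ≤ M / (k : ℝ) ^ 2 := by
        gcongr
        linarith
end
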